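/- arXiv:1903.02509 — 2 statements merged into one kernel-verified Lean document; each statement's English description precedes it below -/
import Mathlib

section
/- Let $Z$ be a $d$-dimensional standard Gaussian random vector and let $0 < \beta < d$. Then there exists a constant $C$ depending only on $d$ and $\beta$ such that for all $s > 0$ and all $y \in \mathbb{R}^d$ with $y \neq 0$, $\mathbb{E}\big[|y + \sqrt{s} Z|^{-\beta}\big] \leq C |y|^{-\beta}$. -/
open MeasureTheory Real

/-- Standard Gaussian density on `ℝ^d`. -/
noncomputable def stdGaussianDensity (d : ℕ) (x : EuclideanSpace ℝ (Fin d)) : ℝ :=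
  (2 * π) ^ (-(d : ℝ) / 2) * Real.exp (-‖x‖ ^ 2 / 2)

open Set

lemma aux_integrableOn_unitBall (d : ℕ) {β : ℝ} (hβ0 : 0 < β) (hβd : β < d) :
    IntegrableOn (fun x : EuclideanSpace ℝ (Fin d) => ‖x‖ ^ (-β))
      (Metric.ball 0 1) volume := by
  have hmeas : Measurable fun x : EuclideanSpace ℝ (Fin d) => ‖x‖ ^ (-β) := by fun_prop
  have hnn : ∀ x : EuclideanSpace ℝ (Fin d), 0 ≤ ‖x‖ ^ (-β) :=
    fun x => Real.rpow_nonneg (norm_nonneg _) _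
  refine ⟨hmeas.aestronglyMeasurable.restrict, ?_⟩
  rw [hasFiniteIntegral_iff_ofReal (Filter.Eventually.of_forall hnn)]
  set μ := (volume : Measure (EuclideanSpace ℝ (Fin d))).restrict (Metric.ball 0 1) with hμ
  rw [lintegral_eq_lintegral_meas_le μ (Filter.Eventually.of_forall hnn) hmeas.aemeasurable]
  have hsub : ∀ t : ℝ, 0 < t →
      {a : EuclideanSpace ℝ (Fin d) | t ≤ ‖a‖ ^ (-β)} ⊆ Metric.closedBall 0 (t ^ (-β⁻¹)) := by
    intro t ht a ha
    simp only [Set.mem_setOf_eq] at ha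
    rw [Metric.mem_closedBall, dist_zero_right]
    have hna : 0 < ‖a‖ := by
      rcases eq_or_lt_of_le (norm_nonneg a) with h | h
      · exfalso
        rw [← h, Real.zero_rpow (neg_ne_zero.mpr hβ0.ne')] at ha
        linarith
      · exact h
    have h2 : (‖a‖ ^ (-β)) ^ (-β⁻¹) ≤ t ^ (-β⁻¹) :=
      Real.rpow_le_rpow_of_nonpos ht ha (neg_nonpos.mpr (inv_nonneg.mpr hβ0.le))
    rwa [← Real.rpow_mul hna.le, neg_mul_neg, mul_inv_cancel₀ hβ0.ne', Real.rpow_one] at h2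
  have hV : μ Set.univ < ⊤ := by
    rw [hμ, Measure.restrict_apply_univ]
    exact measure_ball_lt_top
  calc ∫⁻ t in Set.Ioi (0:ℝ), μ {a | t ≤ ‖a‖ ^ (-β)}
      ≤ ∫⁻ t in Set.Ioc (0:ℝ) 1 ∪ Set.Ioi 1, μ {a | t ≤ ‖a‖ ^ (-β)} :=
        lintegral_mono_set Set.Ioi_subset_Ioc_union_Ioi
    _ ≤ (∫⁻ t in Set.Ioc (0:ℝ) 1, μ {a | t ≤ ‖a‖ ^ (-β)})
        + ∫⁻ t in Set.Ioi (1:ℝ), μ {a | t ≤ ‖a‖ ^ (-β)} := lintegral_union_le _ _ _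
    _ < ⊤ := by
        refine ENNReal.add_lt_top.2 ⟨?_, ?_⟩
        · calc (∫⁻ t in Set.Ioc (0:ℝ) 1, μ {a | t ≤ ‖a‖ ^ (-β)})
              ≤ ∫⁻ _t in Set.Ioc (0:ℝ) 1, μ Set.univ :=
                setLIntegral_mono' measurableSet_Ioc fun t _ => measure_mono (Set.subset_univ _)
            _ = μ Set.univ * volume (Set.Ioc (0:ℝ) 1) := setLIntegral_const _ _
            _ < ⊤ := ENNReal.mul_lt_top hV (by rw [Real.volume_Ioc]; exact ENNReal.ofReal_lt_top)
        · have key : ∀ t ∈ Set.Ioi (1:ℝ), μ {a | t ≤ ‖a‖ ^ (-β)} ≤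
              ENNReal.ofReal (t ^ (-(β⁻¹ * d)))
                * volume (Metric.ball (0 : EuclideanSpace ℝ (Fin d)) 1) := by
            intro t ht
            have ht0 : (0:ℝ) < t := lt_trans one_pos ht
            have hr0 : (0:ℝ) ≤ t ^ (-β⁻¹) := Real.rpow_nonneg ht0.le _
            calc μ {a | t ≤ ‖a‖ ^ (-β)}
                ≤ volume {a : EuclideanSpace ℝ (Fin d) | t ≤ ‖a‖ ^ (-β)} :=
                  Measure.restrict_apply_le _ _
              _ ≤ volume (Metric.closedBall (0 : EuclideanSpace ℝ (Fin d)) (t ^ (-β⁻¹))) :=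
                  measure_mono (hsub t ht0)
              _ = ENNReal.ofReal ((t ^ (-β⁻¹)) ^ Module.finrank ℝ (EuclideanSpace ℝ (Fin d)))
                    * volume (Metric.ball (0 : EuclideanSpace ℝ (Fin d)) 1) :=
                  Measure.addHaar_closedBall _ _ hr0
              _ = ENNReal.ofReal (t ^ (-(β⁻¹ * d)))
                    * volume (Metric.ball (0 : EuclideanSpace ℝ (Fin d)) 1) := by
                  rw [finrank_euclideanSpace_fin, ← Real.rpow_natCast (t ^ (-β⁻¹)) d,
                    ← Real.rpow_mul ht0.le, neg_mul]
          calc (∫⁻ t in Set.Ioi (1:ℝ), μ {a | t ≤ ‖a‖ ^ (-β)})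
              ≤ ∫⁻ t in Set.Ioi (1:ℝ), ENNReal.ofReal (t ^ (-(β⁻¹ * d)))
                  * volume (Metric.ball (0 : EuclideanSpace ℝ (Fin d)) 1) :=
                setLIntegral_mono' measurableSet_Ioi key
            _ = (∫⁻ t in Set.Ioi (1:ℝ), ENNReal.ofReal (t ^ (-(β⁻¹ * d))))
                  * volume (Metric.ball (0 : EuclideanSpace ℝ (Fin d)) 1) :=
                lintegral_mul_const' _ _ measure_ball_lt_top.ne
            _ < ⊤ := by
                refine ENNReal.mul_lt_top ?_ measure_ball_lt_top
                refine IntegrableOn.setLIntegral_lt_top ?_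
                refine integrableOn_Ioi_rpow_of_lt ?_ one_pos
                rw [neg_lt_neg_iff, inv_mul_eq_div]
                exact (one_lt_div hβ0).mpr hβd

lemma aux_polyexp (d : ℕ) {t : ℝ} (ht : 0 < t) :
    t ^ ((d : ℝ) / 2) * Real.exp (-(t / 8)) ≤ 1 + (d.factorial : ℝ) * 8 ^ d := by
  have hfac : (0:ℝ) < (d.factorial : ℝ) := by exact_mod_cast d.factorial_pos
  have h8 : (0:ℝ) < 8 ^ d := by positivity
  rcases le_or_gt t 1 with h | h
  · have h1 : t ^ ((d : ℝ) / 2) ≤ 1 := Real.rpow_le_one ht.le h (by positivity)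
    have h2 : Real.exp (-(t / 8)) ≤ 1 := Real.exp_le_one_iff.mpr (by linarith)
    nlinarith [Real.exp_pos (-(t / 8)), Real.rpow_nonneg ht.le ((d : ℝ) / 2)]
  · have h1 : t ^ ((d : ℝ) / 2) ≤ t ^ (d : ℝ) :=
      Real.rpow_le_rpow_of_exponent_le h.le (by
        rw [div_le_iff₀ (by norm_num : (0:ℝ) < 2)]
        nlinarith [Nat.cast_nonneg (α := ℝ) d])
    have h2 : t ^ (d : ℝ) = t ^ d := Real.rpow_natCast t d
    have h3 : (t / 8) ^ d / (d.factorial : ℝ) ≤ Real.exp (t / 8) := by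
      calc (t / 8) ^ d / (d.factorial : ℝ)
          ≤ ∑ i ∈ Finset.range (d + 1), (t / 8) ^ i / (i.factorial : ℝ) :=
            Finset.single_le_sum (f := fun i => (t / 8) ^ i / (i.factorial : ℝ))
              (fun i _ => by positivity) (Finset.self_mem_range_succ d)
        _ ≤ Real.exp (t / 8) := Real.sum_le_exp_of_nonneg (by positivity) _
    have h4 : t ^ d ≤ (d.factorial : ℝ) * 8 ^ d * Real.exp (t / 8) := by
      rw [div_pow, div_div] at h3
      have := (div_le_iff₀ (by positivity)).mp h3
      nlinarith [this]
    calc t ^ ((d : ℝ) / 2) * Real.exp (-(t / 8))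
        ≤ t ^ (d : ℝ) * Real.exp (-(t / 8)) :=
          mul_le_mul_of_nonneg_right h1 (Real.exp_pos _).le
      _ = t ^ d * Real.exp (-(t / 8)) := by rw [h2]
      _ ≤ ((d.factorial : ℝ) * 8 ^ d * Real.exp (t / 8)) * Real.exp (-(t / 8)) :=
          mul_le_mul_of_nonneg_right h4 (Real.exp_pos _).le
      _ = (d.factorial : ℝ) * 8 ^ d := by
          rw [mul_assoc, ← Real.exp_add]
          simp
      _ ≤ 1 + (d.factorial : ℝ) * 8 ^ d := by linarith

lemma aux_integrable_gauss (d : ℕ) : Integrable (stdGaussianDensity d) := by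
  unfold stdGaussianDensity
  apply Integrable.const_mul
  have h := (GaussianFourier.integrable_cexp_neg_mul_sq_norm_add (V := EuclideanSpace ℝ (Fin d))
      (b := (1/2 : ℂ)) (by norm_num) 0 0).norm
  refine h.congr (Filter.Eventually.of_forall fun v => ?_)
  simp only [inner_zero_left, zero_mul, add_zero, Complex.norm_exp]
  norm_num
  ring_nf
  norm_cast

lemma aux_indicator_smul (d : ℕ) {β : ℝ} (hβ0 : 0 < β) {r : ℝ} (hr : 0 < r)
    (u : EuclideanSpace ℝ (Fin d)) :
    (Metric.ball (0 : EuclideanSpace ℝ (Fin d)) r).indicator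
      (fun x => ‖x‖ ^ (-β)) (r • u)
      = r ^ (-β) * (Metric.ball (0 : EuclideanSpace ℝ (Fin d)) 1).indicator
          (fun x => ‖x‖ ^ (-β)) u := by
  have hnorm : ‖r • u‖ = r * ‖u‖ := by
    rw [norm_smul, Real.norm_eq_abs, abs_of_pos hr]
  by_cases hu : ‖u‖ < 1
  · rw [Set.indicator_of_mem (by rw [mem_ball_zero_iff, hnorm]; nlinarith),
      Set.indicator_of_mem (mem_ball_zero_iff.mpr hu), hnorm,
      Real.mul_rpow hr.le (norm_nonneg _)]
  · rw [Set.indicator_of_notMem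
        (by rw [mem_ball_zero_iff, hnorm]; intro h; exact hu (by nlinarith)),
      Set.indicator_of_notMem (by rw [mem_ball_zero_iff]; exact hu), mul_zero]

lemma aux_nearpart (d : ℕ) {β : ℝ} (hβ0 : 0 < β) (hβd : β < d) {r c : ℝ} (hr : 0 < r)
    (hc : 0 < c) (y : EuclideanSpace ℝ (Fin d)) :
    Integrable (fun z : EuclideanSpace ℝ (Fin d) =>
        (Metric.ball (0 : EuclideanSpace ℝ (Fin d)) r).indicator
          (fun x => ‖x‖ ^ (-β)) (y + c • z)) ∧
    (∫ z : EuclideanSpace ℝ (Fin d),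
        (Metric.ball (0 : EuclideanSpace ℝ (Fin d)) r).indicator
          (fun x => ‖x‖ ^ (-β)) (y + c • z))
      = c ^ (-(d : ℝ)) * (r ^ ((d : ℝ) - β) *
          ∫ x in Metric.ball (0 : EuclideanSpace ℝ (Fin d)) 1, ‖x‖ ^ (-β)) := by
  set f : EuclideanSpace ℝ (Fin d) → ℝ := fun x => ‖x‖ ^ (-β) with hf
  set F₁ := (Metric.ball (0 : EuclideanSpace ℝ (Fin d)) 1).indicator f with hF₁
  set Fr := (Metric.ball (0 : EuclideanSpace ℝ (Fin d)) r).indicator f with hFr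
  have hD : Module.finrank ℝ (EuclideanSpace ℝ (Fin d)) = d := finrank_euclideanSpace_fin
  have hF₁int : Integrable F₁ := by
    rw [hF₁]
    exact (integrable_indicator_iff measurableSet_ball).mpr
      (aux_integrableOn_unitBall d hβ0 hβd)
  have hFrsmul : (fun u => Fr (r • u)) = fun u => r ^ (-β) * F₁ u := by
    funext u
    exact aux_indicator_smul d hβ0 hr u
  have hFrint : Integrable Fr := by
    rw [← integrable_comp_smul_iff volume Fr hr.ne', hFrsmul]
    exact hF₁int.const_mul _
  have hκ : ∫ x, F₁ x = ∫ x in Metric.ball (0 : EuclideanSpace ℝ (Fin d)) 1, f x := by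
    rw [hF₁, integral_indicator measurableSet_ball]
  have hFr_int_val : ∫ x, Fr x = r ^ ((d : ℝ) - β) * ∫ x, F₁ x := by
    have h1 := Measure.integral_comp_smul volume Fr r
    rw [hFrsmul, integral_const_mul, hD] at h1
    have h2 : |((r : ℝ) ^ (d : ℕ))⁻¹| = r ^ (-(d : ℝ)) := by
      rw [abs_of_pos (by positivity), ← Real.rpow_natCast r d, ← Real.rpow_neg hr.le]
    rw [h2, smul_eq_mul] at h1
    have h3 : r ^ ((d : ℝ)) * (r ^ (-β) * ∫ x, F₁ x)
        = r ^ ((d:ℝ)) * (r ^ (-(d:ℝ)) * ∫ x, Fr x) := by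
      rw [← h1]
    rw [← mul_assoc, ← mul_assoc, ← Real.rpow_add hr, ← Real.rpow_add hr] at h3
    simp only [add_neg_cancel, Real.rpow_zero, one_mul] at h3
    rw [← h3, sub_eq_add_neg]
  have htrans : Integrable (fun w => Fr (y + w)) := hFrint.comp_add_left y
  constructor
  · exact (integrable_comp_smul_iff volume (fun w => Fr (y + w)) hc.ne').mpr htrans
  · have h1 := Measure.integral_comp_smul volume (fun w => Fr (y + w)) c
    rw [hD, integral_add_left_eq_self (fun w => Fr w) y] at h1
    have h2 : |((c : ℝ) ^ (d : ℕ))⁻¹| = c ^ (-(d : ℝ)) := by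
      rw [abs_of_pos (by positivity), ← Real.rpow_natCast c d, ← Real.rpow_neg hc.le]
    rw [h2, smul_eq_mul] at h1
    rw [h1, hFr_int_val, hκ]

set_option maxHeartbeats 1000000 in
/-- If `Z` is a standard Gaussian vector in `ℝ^d` and `0 < β < d`, then
`E[|y + √s Z|^{-β}] ≤ C |y|^{-β}` uniformly in `s > 0`. -/
theorem stmt_0 (d : ℕ) (β : ℝ) (hβ0 : 0 < β) (hβd : β < d) :
    ∃ C : ℝ, 0 < C ∧ ∀ s : ℝ, 0 < s → ∀ y : EuclideanSpace ℝ (Fin d), y ≠ 0 →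
      (∫ z : EuclideanSpace ℝ (Fin d),
        stdGaussianDensity d z * ‖y + Real.sqrt s • z‖ ^ (-β))
        ≤ C * ‖y‖ ^ (-β) := by
  classical
  set c₀ : ℝ := (2 * π) ^ (-(d : ℝ) / 2) with hc₀
  have hc₀pos : 0 < c₀ := Real.rpow_pos_of_pos (by positivity) _
  set κ : ℝ := ∫ x in Metric.ball (0 : EuclideanSpace ℝ (Fin d)) 1, ‖x‖ ^ (-β) with hκdef
  have hκ0 : 0 ≤ κ := integral_nonneg fun x => Real.rpow_nonneg (norm_nonneg _) _
  set g₀ : ℝ := ∫ z, stdGaussianDensity d z with hg₀def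
  have hρnn : ∀ z : EuclideanSpace ℝ (Fin d), 0 ≤ stdGaussianDensity d z := by
    intro z
    unfold stdGaussianDensity
    positivity
  have hg₀0 : 0 ≤ g₀ := integral_nonneg hρnn
  set M : ℝ := 1 + (d.factorial : ℝ) * 8 ^ d with hM
  have hM0 : 0 < M := by positivity
  have h2β : (0:ℝ) < 2 ^ β := Real.rpow_pos_of_pos (by norm_num) _
  have h2βd : (0:ℝ) < 2 ^ (β - (d:ℝ)) := Real.rpow_pos_of_pos (by norm_num) _
  refine ⟨2 ^ β * g₀ + c₀ * M * 2 ^ (β - (d:ℝ)) * κ + 1, ?_, ?_⟩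
  · have h1 : 0 ≤ 2 ^ β * g₀ := mul_nonneg h2β.le hg₀0
    have h2 : 0 ≤ c₀ * M * 2 ^ (β - (d:ℝ)) * κ :=
      mul_nonneg (mul_nonneg (mul_nonneg hc₀pos.le hM0.le) h2βd.le) hκ0
    linarith
  intro s hs y hy
  have hy0 : 0 < ‖y‖ := norm_pos_iff.mpr hy
  have hP : 0 ≤ ‖y‖ ^ (-β) := Real.rpow_nonneg (norm_nonneg _) _
  set r : ℝ := ‖y‖ / 2 with hrdef
  have hrpos : 0 < r := by rw [hrdef]; exact div_pos hy0 two_pos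
  set c : ℝ := Real.sqrt s with hcdef
  have hcpos : 0 < c := Real.sqrt_pos.mpr hs
  obtain ⟨hFint, hFval⟩ := aux_nearpart d hβ0 hβd hrpos hcpos y
  set Fr := (Metric.ball (0 : EuclideanSpace ℝ (Fin d)) r).indicator
    (fun x => ‖x‖ ^ (-β)) with hFrdef
  set a : ℝ := c₀ * Real.exp (-‖y‖ ^ 2 / (8 * s)) with ha
  have hanng : 0 ≤ a := mul_nonneg hc₀pos.le (Real.exp_pos _).le
  have hFrnn : ∀ x, 0 ≤ Fr x := fun x =>
    Set.indicator_nonneg (fun x _ => Real.rpow_nonneg (norm_nonneg _) _) _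
  -- pointwise bound
  have hpt : ∀ z : EuclideanSpace ℝ (Fin d),
      stdGaussianDensity d z * ‖y + c • z‖ ^ (-β)
        ≤ stdGaussianDensity d z * r ^ (-β) + a * Fr (y + c • z) := by
    intro z
    by_cases hz : ‖y + c • z‖ < r
    · have hFr : Fr (y + c • z) = ‖y + c • z‖ ^ (-β) := by
        rw [hFrdef, Set.indicator_of_mem (mem_ball_zero_iff.mpr hz)]
      have hcz : ‖c • z‖ = c * ‖z‖ := by
        rw [norm_smul, Real.norm_eq_abs, abs_of_pos hcpos]
      have hzn : ‖y‖ / 2 ≤ c * ‖z‖ := by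
        have h1 : ‖y‖ ≤ ‖y + c • z‖ + ‖c • z‖ := by
          calc ‖y‖ = ‖(y + c • z) - c • z‖ := by rw [add_sub_cancel_right]
            _ ≤ ‖y + c • z‖ + ‖c • z‖ := norm_sub_le _ _
        rw [hcz] at h1
        rw [hrdef] at hz
        linarith
      have hexp : Real.exp (-‖z‖ ^ 2 / 2) ≤ Real.exp (-‖y‖ ^ 2 / (8 * s)) := by
        apply Real.exp_le_exp.mpr
        have hc2 : c ^ 2 = s := Real.sq_sqrt hs.le
        have h4 : (‖y‖ / 2) ^ 2 ≤ (c * ‖z‖) ^ 2 :=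
          pow_le_pow_left₀ (by positivity) hzn 2
        have h4' : (c * ‖z‖) ^ 2 = s * ‖z‖ ^ 2 := by rw [mul_pow, hc2]
        have h4'' : (‖y‖ / 2) ^ 2 = ‖y‖ ^ 2 / 4 := by ring
        have h5 : ‖y‖ ^ 2 ≤ 4 * (s * ‖z‖ ^ 2) := by
          rw [h4', h4''] at h4
          linarith
        rw [neg_div, neg_div, neg_le_neg_iff,
          div_le_div_iff₀ (by positivity) (by norm_num : (0:ℝ) < 2)]
        linarith
      have hXnn : 0 ≤ ‖y + c • z‖ ^ (-β) := Real.rpow_nonneg (norm_nonneg _) _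
      have hmain : stdGaussianDensity d z * ‖y + c • z‖ ^ (-β) ≤ a * Fr (y + c • z) := by
        rw [hFr, ha]
        unfold stdGaussianDensity
        rw [← hc₀]
        rw [mul_assoc, mul_assoc]
        refine mul_le_mul_of_nonneg_left ?_ hc₀pos.le
        exact mul_le_mul_of_nonneg_right hexp hXnn
      have h1nn : 0 ≤ stdGaussianDensity d z * r ^ (-β) :=
        mul_nonneg (hρnn z) (Real.rpow_nonneg hrpos.le _)
      linarith
    · push_neg at hz
      have hX : ‖y + c • z‖ ^ (-β) ≤ r ^ (-β) :=
        Real.rpow_le_rpow_of_nonpos hrpos hz (neg_nonpos.mpr hβ0.le)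
      have h2nn : 0 ≤ a * Fr (y + c • z) := mul_nonneg hanng (hFrnn _)
      have := mul_le_mul_of_nonneg_left hX (hρnn z)
      linarith
  -- integrability of the dominating function
  have hint : Integrable (fun z : EuclideanSpace ℝ (Fin d) =>
      stdGaussianDensity d z * r ^ (-β) + a * Fr (y + c • z)) :=
    ((aux_integrable_gauss d).mul_const _).add (hFint.const_mul a)
  have hmono := integral_mono_of_nonneg
    (Filter.Eventually.of_forall fun z =>
      mul_nonneg (hρnn z) (Real.rpow_nonneg (norm_nonneg _) _))
    hint (Filter.Eventually.of_forall hpt)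
  refine le_trans hmono ?_
  rw [integral_add ((aux_integrable_gauss d).mul_const _) (hFint.const_mul a),
    integral_mul_const, integral_const_mul, hFval]
  -- arithmetic
  have e1 : r ^ (-β) = 2 ^ β * ‖y‖ ^ (-β) := by
    rw [hrdef, Real.div_rpow (norm_nonneg y) (by norm_num : (0:ℝ) ≤ 2),
      Real.rpow_neg (by norm_num : (0:ℝ) ≤ 2), div_eq_mul_inv, inv_inv]
    ring
  have e2a : c ^ (-(d:ℝ)) = s ^ (-((d:ℝ)/2)) := by
    rw [hcdef, Real.sqrt_eq_rpow, ← Real.rpow_mul hs.le]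
    congr 1
    ring
  have e2b : r ^ ((d:ℝ) - β) = ‖y‖ ^ ((d:ℝ)) * ‖y‖ ^ (-β) * 2 ^ (β - (d:ℝ)) := by
    rw [hrdef, Real.div_rpow (norm_nonneg y) (by norm_num : (0:ℝ) ≤ 2), div_eq_mul_inv,
      ← Real.rpow_neg (by norm_num : (0:ℝ) ≤ 2), neg_sub, sub_eq_add_neg,
      Real.rpow_add hy0]
  have e2c : ‖y‖ ^ ((d:ℝ)) = ((‖y‖ ^ 2 : ℝ)) ^ ((d:ℝ)/2) := by
    rw [← Real.rpow_natCast ‖y‖ 2, ← Real.rpow_mul (norm_nonneg y)]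
    congr 1
    push_cast
    ring
  have hkey : Real.exp (-‖y‖ ^ 2 / (8 * s)) * (s ^ (-((d:ℝ)/2)) * ‖y‖ ^ ((d:ℝ))) ≤ M := by
    have ht : 0 < ‖y‖ ^ 2 / s := div_pos (pow_pos hy0 2) hs
    have hpe := aux_polyexp d ht
    have e2d : s ^ (-((d:ℝ)/2)) * ‖y‖ ^ ((d:ℝ)) = (‖y‖ ^ 2 / s) ^ ((d:ℝ)/2) := by
      rw [e2c, Real.div_rpow (by positivity) hs.le, Real.rpow_neg hs.le]
      ring
    have e2e : -‖y‖ ^ 2 / (8 * s) = -((‖y‖ ^ 2 / s) / 8) := by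
      field_simp
    rw [e2d, e2e, hM]
    calc Real.exp (-(‖y‖ ^ 2 / s / 8)) * (‖y‖ ^ 2 / s) ^ ((d:ℝ)/2)
        = (‖y‖ ^ 2 / s) ^ ((d:ℝ)/2) * Real.exp (-(‖y‖ ^ 2 / s / 8)) := by ring
      _ ≤ 1 + (d.factorial : ℝ) * 8 ^ d := hpe
  -- final combination
  have hterm2 : a * (c ^ (-(d:ℝ)) * (r ^ ((d:ℝ) - β) * κ))
      ≤ c₀ * M * 2 ^ (β - (d:ℝ)) * κ * ‖y‖ ^ (-β) := by
    rw [ha, e2a, e2b]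
    have hrw : c₀ * Real.exp (-‖y‖ ^ 2 / (8 * s)) *
        (s ^ (-((d:ℝ)/2)) * (‖y‖ ^ ((d:ℝ)) * ‖y‖ ^ (-β) * 2 ^ (β - (d:ℝ)) * κ))
        = (c₀ * 2 ^ (β - (d:ℝ)) * κ) *
          (Real.exp (-‖y‖ ^ 2 / (8 * s)) * (s ^ (-((d:ℝ)/2)) * ‖y‖ ^ ((d:ℝ)))) *
          ‖y‖ ^ (-β) := by ring
    rw [hrw]
    have hc1 : 0 ≤ c₀ * 2 ^ (β - (d:ℝ)) * κ :=
      mul_nonneg (mul_nonneg hc₀pos.le h2βd.le) hκ0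
    calc (c₀ * 2 ^ (β - (d:ℝ)) * κ) *
          (Real.exp (-‖y‖ ^ 2 / (8 * s)) * (s ^ (-((d:ℝ)/2)) * ‖y‖ ^ ((d:ℝ)))) *
          ‖y‖ ^ (-β)
        ≤ (c₀ * 2 ^ (β - (d:ℝ)) * κ) * M * ‖y‖ ^ (-β) := by
          refine mul_le_mul_of_nonneg_right ?_ hP
          exact mul_le_mul_of_nonneg_left hkey hc1
      _ = c₀ * M * 2 ^ (β - (d:ℝ)) * κ * ‖y‖ ^ (-β) := by ring
  have hterm1 : g₀ * r ^ (-β) = 2 ^ β * g₀ * ‖y‖ ^ (-β) := by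
    rw [e1]; ring
  rw [hterm1]
  have : (2 ^ β * g₀ + c₀ * M * 2 ^ (β - (d:ℝ)) * κ + 1) * ‖y‖ ^ (-β)
      = 2 ^ β * g₀ * ‖y‖ ^ (-β) + c₀ * M * 2 ^ (β - (d:ℝ)) * κ * ‖y‖ ^ (-β)
        + ‖y‖ ^ (-β) := by ring
  rw [this]
  linarith [hterm2, hP]
end

section
/- Let $F$ be a centered random variable in the Malliavin–Sobolev space $\mathbb{D}^{1,2}$ with unit variance such that $F = \delta(v)$ for some $\mathfrak{H}$-valued random variable $v$ in the domain of the divergence operator $\delta$. Then, with $Z \sim N(0,1)$, the total variation distance satisfies $d_{\mathrm{TV}}(F, Z) \le 2 \sqrt{\mathrm{Var}\big( \langle DF, v \rangle_{\mathfrak{H}} \big)}$. -/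
open MeasureTheory ProbabilityTheory Real Set Filter
open scoped RealInnerProductSpace ENNReal NNReal

noncomputable def gK : ℝ → ℝ := fun t => Real.exp (-(t^2)/2)
lemma gK_cont : Continuous gK := by unfold gK; fun_prop
lemma gK_pos (t : ℝ) : 0 < gK t := Real.exp_pos _
lemma gK_eq (t : ℝ) : gK t = Real.exp (-(1/2) * t^2) := by unfold gK; ring_nf
lemma integrable_gK : Integrable gK := by
  simp only [funext gK_eq]; exact integrable_exp_neg_mul_sq (by norm_num)

lemma integral_gK : ∫ t, gK t = Real.sqrt (2 * π) := by
  simp only [funext gK_eq]; rw [integral_gaussian]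
  rw [div_div_eq_mul_div, div_one, mul_comm]

lemma hasDerivAt_neg_gK (t : ℝ) : HasDerivAt (fun t => -gK t) (t * gK t) t := by
  have h1 : HasDerivAt (fun t : ℝ => -(t^2)/2) (-t) t := by
    have := ((hasDerivAt_pow 2 t).neg.div_const 2)
    simpa using this.congr_deriv (by ring)
  have := ((Real.hasDerivAt_exp (-(t^2)/2)).comp t h1).neg
  exact this.congr_deriv (by unfold gK; ring)

lemma tendsto_gK_atTop : Tendsto gK atTop (nhds 0) := by
  apply Real.tendsto_exp_atBot.comp
  have : Tendsto (fun t : ℝ => t^2/2) atTop atTop :=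
    (tendsto_pow_atTop (by norm_num)).atTop_div_const (by norm_num)
  simpa [Function.comp_def, neg_div] using tendsto_neg_atTop_atBot.comp this

lemma integral_mul_gK_Ioi {x : ℝ} (hx : 0 < x) : ∫ t in Ioi x, t * gK t = gK x := by
  have hderiv : ∀ t ∈ Ici x, HasDerivAt (fun t => -gK t) (t * gK t) t :=
    fun t _ => hasDerivAt_neg_gK t
  have hnn : ∀ t ∈ Ioi x, 0 ≤ t * gK t := fun t ht =>
    mul_nonneg (le_of_lt (hx.trans ht)) (gK_pos t).le
  have htend : Tendsto (fun t => -gK t) atTop (nhds 0) := by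
    simpa using tendsto_gK_atTop.neg
  have := integral_Ioi_of_hasDerivAt_of_nonneg
    ((hasDerivAt_neg_gK x).continuousAt.continuousWithinAt)
    (fun t ht => hasDerivAt_neg_gK t) hnn htend
  simpa using this

lemma integrableOn_gK {s : Set ℝ} : IntegrableOn gK s := integrable_gK.integrableOn

lemma tail_Ioi {x : ℝ} (hx : 0 < x) : ∫ t in Ioi x, gK t ≤ gK x / x := by
  have hInt : IntegrableOn (fun t => t * gK t) (Ioi x) := by
    have hderiv : ∀ t ∈ Ioi x, HasDerivAt (fun t => -gK t) (t * gK t) t :=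
      fun t _ => hasDerivAt_neg_gK t
    exact integrableOn_Ioi_deriv_of_nonneg
      ((hasDerivAt_neg_gK x).continuousAt.continuousWithinAt) hderiv
      (fun t ht => mul_nonneg (le_of_lt (hx.trans ht)) (gK_pos t).le)
      (by simpa using tendsto_gK_atTop.neg)
  have h1 : ∫ t in Ioi x, gK t ≤ ∫ t in Ioi x, (t/x) * gK t := by
    apply setIntegral_mono_on integrableOn_gK
    · simpa [div_mul_eq_mul_div, IntegrableOn] using hInt.div_const x
    · exact measurableSet_Ioi
    · intro t ht
      have h2 : 1 ≤ t / x := (one_le_div hx).2 (le_of_lt ht)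
      nlinarith [gK_pos t, (gK_pos t).le]
  calc ∫ t in Ioi x, gK t ≤ ∫ t in Ioi x, (t/x) * gK t := h1
    _ = (∫ t in Ioi x, t * gK t) / x := by
        rw [← integral_div]; congr 1; ext t; ring
    _ = gK x / x := by rw [integral_mul_gK_Ioi hx]

lemma gK_neg (t : ℝ) : gK (-t) = gK t := by unfold gK; ring_nf

lemma tail_Iic {x : ℝ} (hx : x < 0) : ∫ t in Iic x, gK t ≤ gK x / (-x) := by
  have h0 : ∫ t in Iic x, gK t = ∫ t in Ioi (-x), gK t := by
    rw [← integral_comp_neg_Iic]; simp only [gK_neg]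
  rw [h0]
  have := tail_Ioi (x := -x) (by linarith)
  rwa [gK_neg] at this

noncomputable def steinSol (g : ℝ → ℝ) : ℝ → ℝ :=
  fun x => Real.exp (x^2/2) * ∫ t in Iic x, g t * gK t

lemma steinSol_hasDerivAt (hgc : Continuous g)
    (hgi : Integrable (fun t => g t * gK t)) (x : ℝ) :
    HasDerivAt (steinSol g) (x * steinSol g x + g x) x := by
  have hcm : Continuous (fun t => g t * gK t) := hgc.mul gK_cont
  have hG : HasDerivAt (fun y => ∫ t in Iic y, g t * gK t) (g x * gK x) x := by
    have key : ∀ y : ℝ, ∫ t in Iic y, g t * gK t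
        = (∫ t in Iic (0:ℝ), g t * gK t) + ∫ t in (0:ℝ)..y, g t * gK t := by
      intro y
      rw [← intervalIntegral.integral_Iic_sub_Iic hgi.integrableOn hgi.integrableOn]
      ring
    simp only [funext key]
    have : HasDerivAt (fun y => ∫ t in (0:ℝ)..y, g t * gK t) (g x * gK x) x :=
      intervalIntegral.integral_hasDerivAt_right
        (hgi.intervalIntegrable)
        (hcm.stronglyMeasurable.stronglyMeasurableAtFilter)
        hcm.continuousAt
    simpa using this.const_add (∫ t in Iic (0:ℝ), g t * gK t)
  have hE : HasDerivAt (fun y : ℝ => Real.exp (y^2/2)) (x * Real.exp (x^2/2)) x := by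
    have h1 : HasDerivAt (fun y : ℝ => y^2/2) x x := by
      simpa using (hasDerivAt_pow 2 x).div_const 2
    simpa [mul_comm, Function.comp_def] using (Real.hasDerivAt_exp (x^2/2)).comp x h1
  have hmul := hE.mul hG
  unfold steinSol
  refine hmul.congr_deriv ?_
  have h1 : Real.exp (x^2/2) * gK x = 1 := by
    rw [show gK x = Real.exp (-(x^2)/2) from rfl, ← Real.exp_add]
    rw [show x^2/2 + -(x^2)/2 = 0 by ring, Real.exp_zero]
  rw [show rexp (x^2/2) * (g x * gK x) = g x * (rexp (x^2/2) * gK x) by ring, h1, mul_one]; ring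

lemma exp_mul_gK (x : ℝ) : Real.exp (x^2/2) * gK x = 1 := by
  rw [show gK x = Real.exp (-(x^2)/2) from rfl, ← Real.exp_add]
  rw [show x^2/2 + -(x^2)/2 = 0 by ring, Real.exp_zero]


section
variable {g : ℝ → ℝ}

lemma abs_setInt_le (hgb : ∀ x, |g x| ≤ 1) (hgi : Integrable (fun t => g t * gK t))
    {s : Set ℝ} (hs : MeasurableSet s) :
    |∫ t in s, g t * gK t| ≤ ∫ t in s, gK t := by
  rw [← Real.norm_eq_abs]
  refine (norm_integral_le_integral_norm _).trans ?_
  apply setIntegral_mono_on hgi.norm.integrableOn integrable_gK.integrableOn hs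
  intro t _
  rw [Real.norm_eq_abs, abs_mul, abs_of_pos (gK_pos t)]
  exact mul_le_of_le_one_left (gK_pos t).le (hgb t)

lemma G_Iic_pos (hgb : ∀ x, |g x| ≤ 1) (hgi : Integrable (fun t => g t * gK t))
    (hg0 : ∫ t, g t * gK t = 0) {x : ℝ} (hx : 0 < x) :
    |∫ t in Iic x, g t * gK t| ≤ gK x / x := by
  have hsplit : (∫ t in Iic x, g t * gK t) + ∫ t in Ioi x, g t * gK t = 0 := by
    rw [intervalIntegral.integral_Iic_add_Ioi hgi.integrableOn hgi.integrableOn, hg0]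
  have h1 : |∫ t in Iic x, g t * gK t| = |∫ t in Ioi x, g t * gK t| := by
    rw [show (∫ t in Iic x, g t * gK t) = -(∫ t in Ioi x, g t * gK t) by linarith, abs_neg]
  rw [h1]
  exact (abs_setInt_le hgb hgi measurableSet_Ioi).trans (tail_Ioi hx)

lemma G_Iic_neg (hgb : ∀ x, |g x| ≤ 1) (hgi : Integrable (fun t => g t * gK t))
    {x : ℝ} (hx : x < 0) :
    |∫ t in Iic x, g t * gK t| ≤ gK x / (-x) :=
  (abs_setInt_le hgb hgi measurableSet_Iic).trans (tail_Iic hx)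

lemma steinSol_xmul_le (hgb : ∀ x, |g x| ≤ 1) (hgi : Integrable (fun t => g t * gK t))
    (hg0 : ∫ t, g t * gK t = 0) (x : ℝ) : |x * steinSol g x| ≤ 1 := by
  rcases lt_trichotomy x 0 with hx | hx | hx
  · have h := G_Iic_neg hgb hgi hx
    unfold steinSol
    rw [abs_mul, abs_mul, abs_of_pos (Real.exp_pos _)]
    calc |x| * (Real.exp (x^2/2) * |∫ t in Iic x, g t * gK t|)
        ≤ |x| * (Real.exp (x^2/2) * (gK x / (-x))) := by
          apply mul_le_mul_of_nonneg_left (mul_le_mul_of_nonneg_left h (Real.exp_pos _).le) (abs_nonneg x)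
      _ = Real.exp (x^2/2) * gK x := by rw [abs_of_neg hx]; field_simp [hx.ne]
      _ = 1 := exp_mul_gK x
  · simp [hx]
  · have h := G_Iic_pos hgb hgi hg0 hx
    unfold steinSol
    rw [abs_mul, abs_mul, abs_of_pos (Real.exp_pos _)]
    calc |x| * (Real.exp (x^2/2) * |∫ t in Iic x, g t * gK t|)
        ≤ |x| * (Real.exp (x^2/2) * (gK x / x)) := by
          apply mul_le_mul_of_nonneg_left (mul_le_mul_of_nonneg_left h (Real.exp_pos _).le) (abs_nonneg x)
      _ = Real.exp (x^2/2) * gK x := by rw [abs_of_pos hx]; field_simp [hx.ne']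
      _ = 1 := exp_mul_gK x

lemma steinSol_abs_le (hgb : ∀ x, |g x| ≤ 1) (hgi : Integrable (fun t => g t * gK t))
    (hg0 : ∫ t, g t * gK t = 0) (x : ℝ) : |steinSol g x| ≤ 6 := by
  rcases le_or_gt 1 |x| with hx | hx
  · -- |x| ≥ 1 : |f x| = |x f x|/|x| ≤ 1
    have h := steinSol_xmul_le hgb hgi hg0 x
    have hx0 : x ≠ 0 := by intro h0; rw [h0] at hx; norm_num at hx
    have : |steinSol g x| ≤ 1 := by
      rw [abs_mul] at h
      calc |steinSol g x| ≤ |x| * |steinSol g x| := le_mul_of_one_le_left (abs_nonneg _) hx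
        _ ≤ 1 := h
    linarith
  · -- |x| < 1
    unfold steinSol
    rw [abs_mul, abs_of_pos (Real.exp_pos _)]
    have h1 : |∫ t in Iic x, g t * gK t| ≤ Real.sqrt (2*π) := by
      refine (abs_setInt_le hgb hgi measurableSet_Iic).trans ?_
      rw [← integral_gK]
      exact setIntegral_le_integral integrable_gK (Eventually.of_forall fun t => (gK_pos t).le)
    have h2 : Real.sqrt (2*π) ≤ 3 := by
      rw [show (3:ℝ) = Real.sqrt 9 by rw [show (9:ℝ) = 3^2 by norm_num, Real.sqrt_sq]; norm_num]
      exact Real.sqrt_le_sqrt (by nlinarith [Real.pi_le_four])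
    have h3 : Real.exp (x^2/2) ≤ 2 := by
      have hxx : x^2/2 ≤ 1/2 := by nlinarith [abs_nonneg x, sq_abs x]
      have h4 : Real.exp (x^2/2) ≤ Real.exp (1/2) := Real.exp_le_exp.2 hxx
      have h5 : Real.exp (1/2) * Real.exp (1/2) = Real.exp 1 := by
        rw [← Real.exp_add]; norm_num
      nlinarith [Real.exp_one_lt_d9, Real.exp_pos (1/2:ℝ)]
    calc Real.exp (x^2/2) * |∫ t in Iic x, g t * gK t| ≤ 2 * 3 := by
          apply mul_le_mul h3 (h1.trans h2) (abs_nonneg _) (by norm_num)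
      _ = 6 := by norm_num

end

section
variable {g : ℝ → ℝ}

lemma steinSol_deriv (hgc : Continuous g) (hgi : Integrable (fun t => g t * gK t)) :
    deriv (steinSol g) = fun x => x * steinSol g x + g x :=
  funext fun x => (steinSol_hasDerivAt hgc hgi x).deriv

lemma steinSol_cont (hgc : Continuous g) (hgi : Integrable (fun t => g t * gK t)) :
    Continuous (steinSol g) := by
  have : Differentiable ℝ (steinSol g) :=
    fun x => (steinSol_hasDerivAt hgc hgi x).differentiableAt
  exact this.continuous

lemma steinSol_contDiff (hgc : Continuous g) (hgi : Integrable (fun t => g t * gK t)) :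
    ContDiff ℝ 1 (steinSol g) := by
  rw [contDiff_one_iff_deriv]
  refine ⟨fun x => (steinSol_hasDerivAt hgc hgi x).differentiableAt, ?_⟩
  rw [steinSol_deriv hgc hgi]
  exact (continuous_id.mul (steinSol_cont hgc hgi)).add hgc
end

lemma integral_gaussianReal_eq (h : ℝ → ℝ) :
    ∫ x, h x ∂(gaussianReal 0 1) = (Real.sqrt (2*π))⁻¹ * ∫ x, h x * gK x := by
  rw [gaussianReal_of_var_ne_zero _ one_ne_zero]
  have hpdf : gaussianPDF 0 1 = fun x => ((Real.toNNReal (gaussianPDFReal 0 1 x) : ℝ≥0) : ℝ≥0∞) :=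
    rfl
  rw [hpdf, integral_withDensity_eq_integral_smul
    ((measurable_gaussianPDFReal 0 1).real_toNNReal) h]
  rw [← integral_const_mul]
  congr 1; ext x
  rw [NNReal.smul_def, Real.coe_toNNReal _ (gaussianPDFReal_nonneg 0 1 x)]
  simp only [gaussianPDFReal, NNReal.coe_one, mul_one, sub_zero, gK]
  rw [smul_eq_mul]
  ring_nf

lemma int_abs_le_sqrt {Ω : Type*} [MeasurableSpace Ω] (μ : Measure Ω) [IsProbabilityMeasure μ]
    (Y : Ω → ℝ) (hY : MemLp Y 2 μ) :
    ∫ ω, |Y ω| ∂μ ≤ Real.sqrt (∫ ω, (Y ω)^2 ∂μ) := by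
  have hconj : Real.HolderConjugate 2 2 := Real.HolderConjugate.two_two
  have habs : MemLp (fun ω => |Y ω|) (ENNReal.ofReal 2) μ := by
    rw [show ENNReal.ofReal 2 = 2 by norm_num]
    simpa [Real.norm_eq_abs] using hY.norm
  have hone : MemLp (fun _ : Ω => (1:ℝ)) (ENNReal.ofReal 2) μ := memLp_const 1
  have h := integral_mul_le_Lp_mul_Lq_of_nonneg hconj
    (Eventually.of_forall fun ω => abs_nonneg (Y ω))
    (Eventually.of_forall fun _ => zero_le_one) habs hone
  simp only [mul_one, integral_const, measure_univ, ENNReal.toReal_one, smul_eq_mul,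
    Real.one_rpow, one_mul] at h
  have h2 : (∫ a, |Y a| ^ (2:ℝ) ∂μ) = ∫ ω, (Y ω)^2 ∂μ :=
    integral_congr_ae (Eventually.of_forall fun ω =>
      show |Y ω| ^ (2:ℝ) = (Y ω)^2 by
        rw [show (2:ℝ) = ((2:ℕ):ℝ) by norm_num, Real.rpow_natCast, sq_abs])
  rw [h2] at h
  rw [Real.sqrt_eq_rpow]
  simpa [measureReal_def] using h

lemma abs_arctan_le_abs (x : ℝ) : |Real.arctan x| ≤ |x| := by
  have key : ∀ y : ℝ, 0 ≤ y → Real.arctan y ≤ y := by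
    intro y hy
    have hmono : Monotone (fun t : ℝ => t - Real.arctan t) := by
      apply monotone_of_deriv_nonneg
      · exact differentiable_id.sub Real.differentiable_arctan
      · intro t
        rw [deriv_fun_sub differentiableAt_fun_id (Real.differentiable_arctan t), deriv_id'',
          Real.deriv_arctan]
        have h1 : 1/(1+t^2) ≤ 1 := by
          rw [div_le_one (by positivity)]; nlinarith [sq_nonneg t]
        linarith
    have := hmono hy
    simpa [Real.arctan_zero] using this
  rcases le_or_gt 0 x with hx | hx
  · rw [abs_of_nonneg hx, abs_of_nonneg (by simpa using Real.arctan_strictMono.monotone hx)]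
    exact key x hx
  · have h := key (-x) (by linarith)
    rw [abs_of_neg hx, show Real.arctan x = -(Real.arctan (-x)) by rw [Real.arctan_neg]; ring,
      abs_neg, abs_of_nonneg (by simpa using Real.arctan_strictMono.monotone (by linarith : (0:ℝ) ≤ -x))]
    exact h


lemma tendsto_div_nat (x : ℝ) : Tendsto (fun n : ℕ => x / ((n:ℝ)+1)) atTop (nhds 0) :=
  Tendsto.div_atTop tendsto_const_nhds
    (tendsto_atTop_add_const_right _ 1 tendsto_natCast_atTop_atTop)

lemma tendsto_n_arctan (x : ℝ) :
    Tendsto (fun n : ℕ => ((n:ℝ)+1) * Real.arctan (x / ((n:ℝ)+1))) atTop (nhds x) := by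
  rcases eq_or_ne x 0 with rfl | hx
  · simp [Real.arctan_zero]
  · have hd : HasDerivAt Real.arctan 1 0 := by
      simpa using Real.hasDerivAt_arctan 0
    have hslope : Tendsto (slope Real.arctan 0) (nhdsWithin 0 {(0:ℝ)}ᶜ) (nhds 1) :=
      hasDerivAt_iff_tendsto_slope.1 hd
    have ht : Tendsto (fun n : ℕ => x / ((n:ℝ)+1)) atTop (nhdsWithin 0 {(0:ℝ)}ᶜ) := by
      apply tendsto_nhdsWithin_of_tendsto_nhds_of_eventually_within _ (tendsto_div_nat x)
      exact Eventually.of_forall fun n => by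
        simp only [mem_compl_iff, mem_singleton_iff]
        exact div_ne_zero hx (by positivity)
    have hcomp := hslope.comp ht
    have heq : ∀ n : ℕ, x * slope Real.arctan 0 (x / ((n:ℝ)+1))
        = ((n:ℝ)+1) * Real.arctan (x / ((n:ℝ)+1)) := by
      intro n
      have hn : ((n:ℝ)+1) ≠ 0 := by positivity
      rw [slope_def_field, Real.arctan_zero, sub_zero, sub_zero]
      field_simp
    have h2 := hcomp.const_mul x
    simp only [Function.comp_def, mul_one] at h2
    exact h2.congr heq

lemma tendsto_dn (x : ℝ) :
    Tendsto (fun n : ℕ => 1 / (1 + (x / ((n:ℝ)+1))^2)) atTop (nhds 1) := by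
  have h1 : Tendsto (fun n : ℕ => 1 + (x / ((n:ℝ)+1))^2) atTop (nhds 1) := by
    have := ((tendsto_div_nat x).pow 2).const_add 1
    simpa using this
  have h2 := h1.inv₀ (by norm_num)
  simp only [inv_one] at h2
  exact h2.congr fun n => by rw [one_div]

lemma dn_le_one (x : ℝ) (n : ℕ) : |1 / (1 + (x / ((n:ℝ)+1))^2)| ≤ 1 := by
  rw [abs_of_pos (by positivity)]
  rw [div_le_one (by positivity)]
  nlinarith [sq_nonneg (x / ((n:ℝ)+1))]

lemma mean_eq_one {Ω : Type*} [MeasurableSpace Ω] (μ : Measure Ω) [IsProbabilityMeasure μ]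
    (F X : Ω → ℝ) (hFmeas : Measurable F) (hF2 : MemLp F 2 μ)
    (hunitvar : ∫ ω, (F ω)^2 ∂μ = 1) (hX : MemLp X 2 μ)
    (hibp : ∀ φ : ℝ → ℝ, ContDiff ℝ 1 φ →
      (∃ M : ℝ, ∀ x : ℝ, |φ x| ≤ M ∧ |deriv φ x| ≤ M) →
      ∫ ω, φ (F ω) * F ω ∂μ = ∫ ω, deriv φ (F ω) * X ω ∂μ) :
    ∫ ω, X ω ∂μ = 1 := by
  set φ : ℕ → ℝ → ℝ := fun n x => ((n:ℝ)+1) * Real.arctan (x / ((n:ℝ)+1)) with hφ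
  set d : ℕ → ℝ → ℝ := fun n x => 1 / (1 + (x / ((n:ℝ)+1))^2) with hd
  have hn0 : ∀ n : ℕ, ((n:ℝ)+1) ≠ 0 := fun n => by positivity
  have hder : ∀ n x, HasDerivAt (φ n) (d n x) x := by
    intro n x
    have hin : HasDerivAt (fun y : ℝ => y / ((n:ℝ)+1)) (1/((n:ℝ)+1)) x := by
      simpa using (hasDerivAt_id x).div_const ((n:ℝ)+1)
    have := ((Real.hasDerivAt_arctan (x/((n:ℝ)+1))).comp x hin).const_mul ((n:ℝ)+1)
    refine this.congr_deriv ?_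
    rw [hd]
    field_simp
  have hderiv_eq : ∀ n, deriv (φ n) = d n := fun n => funext fun x => (hder n x).deriv
  have hcd : ∀ n, ContDiff ℝ 1 (φ n) := by
    intro n
    exact contDiff_const.mul (Real.contDiff_arctan.comp (contDiff_id.div_const _))
  have hbd : ∀ n : ℕ, ∃ M : ℝ, ∀ x : ℝ, |φ n x| ≤ M ∧ |deriv (φ n) x| ≤ M := by
    intro n
    refine ⟨((n:ℝ)+1) * (π/2) + 1, fun x => ⟨?_, ?_⟩⟩
    · rw [hφ]
      simp only
      rw [abs_mul, abs_of_pos (by positivity : (0:ℝ) < (n:ℝ)+1)]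
      have h1 : |Real.arctan (x / ((n:ℝ)+1))| ≤ π/2 := by
        rw [abs_le]
        exact ⟨(Real.neg_pi_div_two_lt_arctan _).le, (Real.arctan_lt_pi_div_two _).le⟩
      nlinarith [Real.pi_pos, (abs_nonneg (Real.arctan (x / ((n:ℝ)+1))))]
    · rw [hderiv_eq n]
      have := dn_le_one x n
      have hpi : 0 < ((n:ℝ)+1) * (π/2) := by positivity
      calc |d n x| ≤ 1 := this
        _ ≤ ((n:ℝ)+1) * (π/2) + 1 := by linarith
  have heq : ∀ n, ∫ ω, φ n (F ω) * F ω ∂μ = ∫ ω, d n (F ω) * X ω ∂μ := by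
    intro n
    have := hibp (φ n) (hcd n) (hbd n)
    rwa [hderiv_eq n] at this
  -- limit of LHS
  have hφcont : ∀ n, Continuous (φ n) := fun n => (hcd n).continuous
  have hdcont : ∀ n, Continuous (d n) := by
    intro n
    apply continuous_const.div
    · fun_prop
    · intro x; positivity
  have hL1 : Tendsto (fun n => ∫ ω, φ n (F ω) * F ω ∂μ) atTop (nhds (∫ ω, (F ω)^2 ∂μ)) := by
    apply tendsto_integral_of_dominated_convergence (fun ω => (F ω)^2)
    · exact fun n => (((hφcont n).measurable.comp hFmeas).mul hFmeas).aestronglyMeasurable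
    · exact hF2.integrable_sq
    · intro n
      refine Eventually.of_forall fun ω => ?_
      rw [Real.norm_eq_abs, abs_mul]
      have h1 : |φ n (F ω)| ≤ |F ω| := by
        rw [hφ]; simp only
        rw [abs_mul, abs_of_pos (by positivity : (0:ℝ) < (n:ℝ)+1)]
        calc ((n:ℝ)+1) * |Real.arctan (F ω / ((n:ℝ)+1))| ≤ ((n:ℝ)+1) * |F ω / ((n:ℝ)+1)| := by
              apply mul_le_mul_of_nonneg_left (abs_arctan_le_abs _) (by positivity)
          _ = |F ω| := by
              rw [abs_div, abs_of_pos (by positivity : (0:ℝ) < (n:ℝ)+1)]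
              field_simp
      calc |φ n (F ω)| * |F ω| ≤ |F ω| * |F ω| :=
            mul_le_mul_of_nonneg_right h1 (abs_nonneg _)
        _ = (F ω)^2 := by rw [sq, ← abs_mul, abs_mul_self]
    · refine Eventually.of_forall fun ω => ?_
      have := (tendsto_n_arctan (F ω)).mul_const (F ω)
      rw [← sq] at this
      exact this
  have hL2 : Tendsto (fun n => ∫ ω, d n (F ω) * X ω ∂μ) atTop (nhds (∫ ω, X ω ∂μ)) := by
    apply tendsto_integral_of_dominated_convergence (fun ω => |X ω|)
    · exact fun n => (((hdcont n).measurable.comp hFmeas).aestronglyMeasurable).mul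
        hX.aestronglyMeasurable
    · exact hX.integrable (by norm_num) |>.abs
    · intro n
      refine Eventually.of_forall fun ω => ?_
      rw [Real.norm_eq_abs, abs_mul]
      calc |d n (F ω)| * |X ω| ≤ 1 * |X ω| :=
            mul_le_mul_of_nonneg_right (dn_le_one _ _) (abs_nonneg _)
        _ = |X ω| := one_mul _
    · refine Eventually.of_forall fun ω => ?_
      have := (tendsto_dn (F ω)).mul_const (X ω)
      rw [one_mul] at this
      exact this
  have huniq := tendsto_nhds_unique (hL1.congr heq) hL2
  rw [← huniq, hunitvar]

lemma stein_bound_cont {Ω : Type*} [MeasurableSpace Ω] (μ : Measure Ω) [IsProbabilityMeasure μ]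
    (F X : Ω → ℝ) (hFmeas : Measurable F) (hF2 : MemLp F 2 μ) (hX : MemLp X 2 μ)
    (hibp : ∀ φ : ℝ → ℝ, ContDiff ℝ 1 φ →
      (∃ M : ℝ, ∀ x : ℝ, |φ x| ≤ M ∧ |deriv φ x| ≤ M) →
      ∫ ω, φ (F ω) * F ω ∂μ = ∫ ω, deriv φ (F ω) * X ω ∂μ)
    (h : ℝ → ℝ) (hhc : Continuous h) (hh01 : ∀ x, 0 ≤ h x ∧ h x ≤ 1) :
    (∫ ω, h (F ω) ∂μ) - (∫ x, h x ∂(gaussianReal 0 1)) ≤ 2 * ∫ ω, |X ω - 1| ∂μ := by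
  set c : ℝ := ∫ x, h x ∂(gaussianReal 0 1) with hc
  have hcnn : 0 ≤ c := integral_nonneg fun x => (hh01 x).1
  have hhintγ : Integrable h (gaussianReal 0 1) := by
    refine Integrable.mono' (integrable_const 1) hhc.aestronglyMeasurable ?_
    exact Eventually.of_forall fun x => by
      rw [Real.norm_eq_abs, abs_of_nonneg (hh01 x).1]; exact (hh01 x).2
  have hcle : c ≤ 1 := by
    rw [hc]
    calc ∫ x, h x ∂(gaussianReal 0 1) ≤ ∫ _x, (1:ℝ) ∂(gaussianReal 0 1) :=
          integral_mono hhintγ (integrable_const 1) fun x => (hh01 x).2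
      _ = 1 := by simp
  set g : ℝ → ℝ := fun x => h x - c with hgdef
  have hgc : Continuous g := hhc.sub continuous_const
  have hgb : ∀ x, |g x| ≤ 1 := fun x => by
    rw [hgdef, abs_le]
    constructor <;> simp only <;> [linarith [(hh01 x).1]; linarith [(hh01 x).2]]
  have hhgKint : Integrable (fun t => h t * gK t) :=
    integrable_gK.bdd_mul hhc.aestronglyMeasurable
      (c := 1) (Eventually.of_forall fun x => by rw [Real.norm_eq_abs, abs_of_nonneg (hh01 x).1]; exact (hh01 x).2)
  have hgi : Integrable (fun t => g t * gK t) :=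
    integrable_gK.bdd_mul hgc.aestronglyMeasurable
      (c := 1) (Eventually.of_forall fun x => by rw [Real.norm_eq_abs]; exact hgb x)
  have hsqrtpos : (0:ℝ) < Real.sqrt (2*π) := Real.sqrt_pos.2 (by positivity)
  have hg0 : ∫ t, g t * gK t = 0 := by
    have hgeq : (fun t => g t * gK t) = fun t => h t * gK t - c * gK t := by
      funext t; rw [hgdef]; ring
    rw [hgeq, integral_sub hhgKint (integrable_gK.const_mul c), integral_const_mul, integral_gK]
    have hch : ∫ x, h x * gK x = Real.sqrt (2*π) * c := by
      have := integral_gaussianReal_eq h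
      rw [← hc] at this
      field_simp at this ⊢
      linarith
    rw [hch]
    ring
  set f : ℝ → ℝ := steinSol g with hfdef
  have hfd : deriv f = fun x => x * f x + g x := steinSol_deriv hgc hgi
  have hfM : ∃ M : ℝ, ∀ x : ℝ, |f x| ≤ M ∧ |deriv f x| ≤ M := by
    refine ⟨6, fun x => ⟨steinSol_abs_le hgb hgi hg0 x, ?_⟩⟩
    rw [hfd]
    calc |x * f x + g x| ≤ |x * f x| + |g x| := abs_add_le _ _
      _ ≤ 1 + 1 := add_le_add (steinSol_xmul_le hgb hgi hg0 x) (hgb x)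
      _ ≤ 6 := by norm_num
  have hderiv_le : ∀ y, |deriv f y| ≤ 2 := by
    intro y
    rw [hfd]
    calc |y * f y + g y| ≤ |y * f y| + |g y| := abs_add_le _ _
      _ ≤ 1 + 1 := add_le_add (steinSol_xmul_le hgb hgi hg0 y) (hgb y)
      _ = 2 := by norm_num
  have hibpf := hibp f (steinSol_contDiff hgc hgi) hfM
  -- integrability facts
  have hfmeas : Continuous f := (steinSol_contDiff hgc hgi).continuous
  have hdfmeas : Continuous (deriv f) := by rw [hfd]; exact (continuous_id.mul hfmeas).add hgc
  have hFint : Integrable F μ := hF2.integrable one_le_two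
  have hXint : Integrable X μ := hX.integrable one_le_two
  have hint1 : Integrable (fun ω => deriv f (F ω)) μ := by
    refine Integrable.mono' (integrable_const 2) ((hdfmeas.measurable.comp hFmeas).aestronglyMeasurable) ?_
    exact Eventually.of_forall fun ω => by rw [Real.norm_eq_abs]; exact hderiv_le _
  have hint2 : Integrable (fun ω => deriv f (F ω) * X ω) μ := by
    refine hXint.bdd_mul ((hdfmeas.measurable.comp hFmeas).aestronglyMeasurable) (c := 2) (Eventually.of_forall fun ω => ?_)
    rw [Real.norm_eq_abs]; exact hderiv_le _
  have hint3 : Integrable (fun ω => h (F ω)) μ := by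
    refine Integrable.mono' (integrable_const 1) ((hhc.measurable.comp hFmeas).aestronglyMeasurable) ?_
    exact Eventually.of_forall fun ω => by
      rw [Real.norm_eq_abs, abs_of_nonneg (hh01 _).1]; exact (hh01 _).2
  -- main computation
  have step1 : (∫ ω, h (F ω) ∂μ) - c = ∫ ω, deriv f (F ω) * (1 - X ω) ∂μ := by
    have e1 : (∫ ω, h (F ω) ∂μ) - c = ∫ ω, g (F ω) ∂μ := by
      rw [hgdef]
      rw [integral_sub hint3 (integrable_const c), integral_const, probReal_univ, one_smul]
    have e2 : ∀ ω, g (F ω) = deriv f (F ω) - f (F ω) * F ω := by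
      intro ω
      rw [hfd]
      simp only
      ring
    rw [e1]
    calc ∫ ω, g (F ω) ∂μ = ∫ ω, (deriv f (F ω) - f (F ω) * F ω) ∂μ := by
          exact integral_congr_ae (Eventually.of_forall fun ω => e2 ω)
      _ = (∫ ω, deriv f (F ω) ∂μ) - ∫ ω, f (F ω) * F ω ∂μ := by
          apply integral_sub hint1
          refine hFint.bdd_mul ((hfmeas.measurable.comp hFmeas).aestronglyMeasurable) (c := 6) (Eventually.of_forall fun ω => ?_)
          rw [Real.norm_eq_abs]; exact steinSol_abs_le hgb hgi hg0 _
      _ = (∫ ω, deriv f (F ω) ∂μ) - ∫ ω, deriv f (F ω) * X ω ∂μ := by rw [hibpf]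
      _ = ∫ ω, deriv f (F ω) * (1 - X ω) ∂μ := by
          rw [← integral_sub hint1 hint2]
          exact integral_congr_ae (Eventually.of_forall fun ω => by ring)
  have step2 : ∫ ω, deriv f (F ω) * (1 - X ω) ∂μ ≤ 2 * ∫ ω, |X ω - 1| ∂μ := by
    rw [← integral_const_mul]
    apply integral_mono (hint1.sub hint2 |>.congr ?_) ((hXint.sub (integrable_const 1)).abs.const_mul 2)
    · intro ω
      calc deriv f (F ω) * (1 - X ω) ≤ |deriv f (F ω) * (1 - X ω)| := le_abs_self _
        _ = |deriv f (F ω)| * |1 - X ω| := abs_mul _ _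
        _ ≤ 2 * |1 - X ω| := mul_le_mul_of_nonneg_right (hderiv_le _) (abs_nonneg _)
        _ = 2 * |X ω - 1| := by rw [abs_sub_comm]
    · exact Eventually.of_forall fun ω => by simp only [Pi.sub_apply]; ring
  linarith [step1, step2]

/-- Malliavin–Stein bound: if `F = δ(v)` is centered with unit variance, where the
duality between the Malliavin derivative `D` and the divergence `δ` is encoded by the
integration-by-parts formula `E[φ(F) F] = E[φ'(F) ⟨DF, v⟩_H]`, then
`d_TV(F, N(0,1)) ≤ 2 √(Var⟨DF, v⟩_H)`. -/
theorem stmt_13 {Ω : Type*} [MeasurableSpace Ω] (μ : Measure Ω) [IsProbabilityMeasure μ]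
    {H : Type*} [NormedAddCommGroup H] [InnerProductSpace ℝ H]
    (F : Ω → ℝ) (v DF : Ω → H)
    (hFmeas : Measurable F)
    (hF2 : MemLp F 2 μ)
    (hcentered : ∫ ω, F ω ∂μ = 0)
    (hunitvar : ∫ ω, (F ω) ^ 2 ∂μ = 1)
    (hDFv : MemLp (fun ω => ⟪DF ω, v ω⟫) 2 μ)
    (hibp : ∀ φ : ℝ → ℝ, ContDiff ℝ 1 φ →
      (∃ M : ℝ, ∀ x : ℝ, |φ x| ≤ M ∧ |deriv φ x| ≤ M) →
      ∫ ω, φ (F ω) * F ω ∂μ = ∫ ω, deriv φ (F ω) * ⟪DF ω, v ω⟫ ∂μ) :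
    ∀ A : Set ℝ, MeasurableSet A →
      (μ {ω | F ω ∈ A}).toReal - (gaussianReal 0 1 A).toReal ≤
        2 * Real.sqrt
          (∫ ω, (⟪DF ω, v ω⟫ - ∫ ω', ⟪DF ω', v ω'⟫ ∂μ) ^ 2 ∂μ) := by
  intro A hA
  set X : Ω → ℝ := fun ω => ⟪DF ω, v ω⟫ with hXdef
  have hmean : ∫ ω, X ω ∂μ = 1 :=
    mean_eq_one μ F X hFmeas hF2 hunitvar hDFv hibp
  set R : ℝ := 2 * Real.sqrt (∫ ω, (X ω - ∫ ω', X ω' ∂μ) ^ 2 ∂μ) with hRdef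
  have hRnn : 0 ≤ R := by positivity
  -- the key analytic bound
  have hkey : ∀ h : ℝ → ℝ, Continuous h → (∀ x, 0 ≤ h x ∧ h x ≤ 1) →
      (∫ ω, h (F ω) ∂μ) - (∫ x, h x ∂(gaussianReal 0 1)) ≤ R := by
    intro h hhc hh01
    refine (stein_bound_cont μ F X hFmeas hF2 hDFv hibp h hhc hh01).trans ?_
    rw [hRdef]
    have h1 : ∫ ω, |X ω - 1| ∂μ ≤ Real.sqrt (∫ ω, (X ω - 1)^2 ∂μ) :=
      int_abs_le_sqrt μ _ (hDFv.sub (memLp_const 1))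
    rw [hmean]
    linarith
  -- measure-theoretic approximation
  set ν : Measure ℝ := μ.map F with hνdef
  have hνprob : IsProbabilityMeasure ν := Measure.isProbabilityMeasure_map hFmeas.aemeasurable
  set γ : Measure ℝ := gaussianReal 0 1 with hγdef
  have hμA : (μ {ω | F ω ∈ A}).toReal = (ν A).toReal := by
    rw [hνdef, Measure.map_apply hFmeas hA]; rfl
  rw [hμA]
  refine le_of_forall_pos_le_add fun ε hε => ?_
  -- compact inner approximation of A under ν
  obtain ⟨K, hKA, hKcomp, hKlt⟩ := hA.exists_isCompact_lt_add (measure_ne_top ν A)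
    (ε := ENNReal.ofReal (ε/2)) (by simp [ENNReal.ofReal_eq_zero]; linarith)
  have hνAK : (ν A).toReal ≤ (ν K).toReal + ε/2 := by
    have := hKlt.le
    have h2 := ENNReal.toReal_mono (by finiteness) this
    rwa [ENNReal.toReal_add (measure_ne_top _ _) ENNReal.ofReal_ne_top,
      ENNReal.toReal_ofReal (by linarith)] at h2
  rcases K.eq_empty_or_nonempty with rfl | hKne
  · -- empty compact: ν A ≤ ε/2
    simp only [measure_empty, ENNReal.toReal_zero, zero_add] at hνAK
    have hγnn : 0 ≤ (γ A).toReal := ENNReal.toReal_nonneg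
    linarith
  -- choose δ with γ(thickening δ K) < γ K + ε/2
  have hthick : Tendsto (fun δ => γ (Metric.thickening δ K)) (nhdsWithin 0 (Ioi 0))
      (nhds (γ K)) :=
    tendsto_measure_thickening_of_isClosed
      ⟨1, by norm_num, measure_ne_top _ _⟩ hKcomp.isClosed
  have hlt : γ K < γ K + ENNReal.ofReal (ε/2) :=
    ENNReal.lt_add_right (measure_ne_top _ _) (by simp [ENNReal.ofReal_eq_zero]; linarith)
  have hev : ∀ᶠ δ in nhdsWithin 0 (Ioi 0),
      γ (Metric.thickening δ K) < γ K + ENNReal.ofReal (ε/2) :=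
    hthick.eventually_lt_const hlt
  obtain ⟨δ, hδprop, hδpos⟩ := (hev.and self_mem_nhdsWithin).exists
  replace hδpos : 0 < δ := hδpos
  -- the bump function
  set h : ℝ → ℝ := fun x => max (1 - Metric.infDist x K / δ) 0 with hhdef
  have hhc : Continuous h :=
    (continuous_const.sub ((Metric.continuous_infDist_pt K).div_const δ)).max continuous_const
  have hh01 : ∀ x, 0 ≤ h x ∧ h x ≤ 1 := by
    intro x
    refine ⟨le_max_right _ _, ?_⟩
    apply max_le _ zero_le_one
    have : 0 ≤ Metric.infDist x K / δ := div_nonneg Metric.infDist_nonneg hδpos.le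
    linarith
  have hhK : ∀ x ∈ K, h x = 1 := by
    intro x hx
    rw [hhdef]
    simp only
    rw [Metric.infDist_zero_of_mem hx]
    norm_num
  have hhsupp : ∀ x, x ∉ Metric.thickening δ K → h x = 0 := by
    intro x hx
    rw [Metric.mem_thickening_iff_infDist_lt hKne, not_lt] at hx
    rw [hhdef]
    simp only
    rw [max_eq_right]
    have h1 : 1 ≤ Metric.infDist x K / δ := (one_le_div hδpos).2 hx
    linarith
  -- ν side: (ν K).toReal ≤ ∫ h dν = ∫ h∘F dμ
  have hhintν : Integrable h ν := by
    refine Integrable.mono' (integrable_const 1) hhc.aestronglyMeasurable ?_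
    exact Eventually.of_forall fun x => by
      rw [Real.norm_eq_abs, abs_of_nonneg (hh01 x).1]; exact (hh01 x).2
  have hνK : (ν K).toReal ≤ ∫ x, h x ∂ν := by
    have hind : ∫ x, K.indicator (fun _ => (1:ℝ)) x ∂ν = (ν K).toReal := by
      rw [integral_indicator_const (1:ℝ) hKcomp.isClosed.measurableSet, smul_eq_mul, mul_one, measureReal_def]
    rw [← hind]
    apply integral_mono ((integrable_const (1:ℝ)).indicator hKcomp.isClosed.measurableSet) hhintν
    intro x
    by_cases hx : x ∈ K
    · rw [indicator_of_mem hx, hhK x hx]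
    · rw [indicator_of_notMem hx]; exact (hh01 x).1
  have hνint : ∫ x, h x ∂ν = ∫ ω, h (F ω) ∂μ := by
    rw [hνdef]
    exact integral_map hFmeas.aemeasurable hhc.aestronglyMeasurable
  -- γ side: ∫ h dγ ≤ (γ (thickening δ K)).toReal ≤ (γ K).toReal + ε/2 ≤ (γ A).toReal + ε/2
  have hhintγ : Integrable h γ := by
    refine Integrable.mono' (integrable_const 1) hhc.aestronglyMeasurable ?_
    exact Eventually.of_forall fun x => by
      rw [Real.norm_eq_abs, abs_of_nonneg (hh01 x).1]; exact (hh01 x).2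
  have hγh : ∫ x, h x ∂γ ≤ (γ (Metric.thickening δ K)).toReal := by
    have hind : ∫ x, (Metric.thickening δ K).indicator (fun _ => (1:ℝ)) x ∂γ
        = (γ (Metric.thickening δ K)).toReal := by
      rw [integral_indicator_const (1:ℝ) Metric.isOpen_thickening.measurableSet,
        smul_eq_mul, mul_one, measureReal_def]
    rw [← hind]
    apply integral_mono hhintγ
      ((integrable_const (1:ℝ)).indicator Metric.isOpen_thickening.measurableSet)
    intro x
    by_cases hx : x ∈ Metric.thickening δ K
    · rw [indicator_of_mem hx]; exact (hh01 x).2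
    · rw [indicator_of_notMem hx, hhsupp x hx]
  have hγKA : (γ (Metric.thickening δ K)).toReal ≤ (γ A).toReal + ε/2 := by
    have h2 := ENNReal.toReal_mono (by finiteness) hδprop.le
    rw [ENNReal.toReal_add (measure_ne_top _ _) ENNReal.ofReal_ne_top,
      ENNReal.toReal_ofReal (by linarith)] at h2
    have h3 : (γ K).toReal ≤ (γ A).toReal :=
      ENNReal.toReal_mono (measure_ne_top _ _) (measure_mono hKA)
    linarith
  -- combine
  have hmain := hkey h hhc hh01
  have hfinal : (ν A).toReal ≤ (∫ ω, h (F ω) ∂μ) + ε/2 := by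
    rw [← hνint]
    linarith
  rw [hγdef] at hγh
  linarith [hmain, hγh, hγKA, hfinal]
end
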